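/- arXiv:1709.10021 — 3 statements merged into one kernel-verified Lean document; each statement's English description precedes it below -/
import Mathlib

section
/- Let G be a connected simple graph on n vertices with m edges. If m ≤ n and the maximum degree Δ of G satisfies Δ ≥ 3, then χ_D(G) ≤ Δ + 1; that is, there exists a proper vertex coloring c : V(G) → Fin (Δ + 1) such that the only automorphism φ of G satisfying c ∘ φ = c is the identity. -/
open Finset SimpleGraph

namespace UDC

variable {V : Type*} [Fintype V] [DecidableEq V] (G : SimpleGraph V) [DecidableRel G.Adj] (r : V)

noncomputable def backs (v : V) : Finset V :=
  (G.neighborFinset v).filter (fun u => G.dist r u + 1 = G.dist r v)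

noncomputable def flats (v : V) : Finset V :=
  (G.neighborFinset v).filter (fun u => G.dist r u = G.dist r v)

noncomputable def downs (v : V) : Finset V :=
  (G.neighborFinset v).filter (fun u => G.dist r v + 1 = G.dist r u)

def special (v : V) : Prop := (flats G r v).Nonempty ∨ 2 ≤ (backs G r v).card

noncomputable instance : DecidablePred (special G r) := fun _ => by unfold special; infer_instance

noncomputable def ord (v : V) : ℕ :=
  G.dist r v * (2 * Fintype.card V) +
    (if special G r v then 0 else 1) * Fintype.card V + (Fintype.equivFin V v : ℕ)

noncomputable def gens (v : V) : Finset V :=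
  Finset.univ.filter (fun u => ord G r u < ord G r v ∧
    (G.Adj u v ∨
     (G.dist r u = G.dist r v ∧ ∃ p, G.Adj p u ∧ G.Adj p v ∧ G.dist r p + 1 = G.dist r v) ∨
     (u = r ∧ G.degree v = G.maxDegree)))

noncomputable def col (v : V) : Fin (G.maxDegree + 1) :=
  let F := (gens G r v).attach.image (fun u : {x // x ∈ gens G r v} =>
    have : ord G r u.1 < ord G r v := (Finset.mem_filter.mp u.2).2.1
    col u.1)
  if h : (Finset.univ \ F).Nonempty then (Finset.univ \ F).min' h else 0
termination_by ord G r v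

variable {G r}

lemma mem_gens {u v : V} : u ∈ gens G r v ↔ ord G r u < ord G r v ∧
    (G.Adj u v ∨
     (G.dist r u = G.dist r v ∧ ∃ p, G.Adj p u ∧ G.Adj p v ∧ G.dist r p + 1 = G.dist r v) ∨
     (u = r ∧ G.degree v = G.maxDegree)) := by
  unfold gens
  simp

lemma eFin_lt (v : V) : (Fintype.equivFin V v : ℕ) < Fintype.card V := (Fintype.equivFin V v).2

lemma ord_lt_of_dist_lt {u v : V} (h : G.dist r u < G.dist r v) : ord G r u < ord G r v := by
  have h1 := eFin_lt u
  have h2 : (if special G r u then (0:ℕ) else 1) ≤ 1 := by split <;> omega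
  have hN : 0 < Fintype.card V := Fintype.card_pos_iff.mpr ⟨v⟩
  calc ord G r u < (G.dist r u + 1) * (2 * Fintype.card V) := by
        unfold ord
        have : (if special G r u then (0:ℕ) else 1) * Fintype.card V ≤ Fintype.card V :=
          le_trans (Nat.mul_le_mul_right _ h2) (by omega)
        nlinarith
    _ ≤ G.dist r v * (2 * Fintype.card V) := Nat.mul_le_mul_right _ h
    _ ≤ ord G r v := by unfold ord; omega

lemma dist_le_of_ord_lt {u v : V} (h : ord G r u < ord G r v) : G.dist r u ≤ G.dist r v := by
  by_contra hc
  exact absurd (ord_lt_of_dist_lt (show G.dist r v < G.dist r u by omega)) (Nat.lt_asymm h)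

lemma special_of_ord_lt {u v : V} (h : ord G r u < ord G r v) (hd : G.dist r u = G.dist r v)
    (hs : special G r v) : special G r u := by
  by_contra hns
  unfold ord at h
  rw [hd, if_pos hs, if_neg hns] at h
  have := eFin_lt (V := V) v
  omega

lemma ord_injective : Function.Injective (ord G r) := by
  intro u v h
  have hd : G.dist r u = G.dist r v := by
    rcases lt_trichotomy (G.dist r u) (G.dist r v) with h'|h'|h'
    · exact absurd (ord_lt_of_dist_lt h') (by omega)
    · exact h'
    · exact absurd (ord_lt_of_dist_lt h') (by omega)
  unfold ord at h
  rw [hd] at h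
  have h1 := eFin_lt (V := V) u
  have h2 := eFin_lt (V := V) v
  have he : (Fintype.equivFin V u : ℕ) = (Fintype.equivFin V v : ℕ) := by
    split at h <;> split at h <;> omega
  exact (Fintype.equivFin V).injective (Fin.val_injective he)

lemma ne_of_ord_lt {u v : V} (h : ord G r u < ord G r v) : u ≠ v := by
  intro hEq; subst hEq; exact Nat.lt_irrefl _ h

lemma col_spec {v : V} (h : (gens G r v).card ≤ G.maxDegree) :
    ∀ u ∈ gens G r v, col G r u ≠ col G r v := by
  have hvF : col G r v ∉ (gens G r v).attach.image
      (fun u : {x // x ∈ gens G r v} => col G r u.1) := by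
    set F := (gens G r v).attach.image (fun u : {x // x ∈ gens G r v} =>
      col G r u.1) with hF
    have hcard : F.card ≤ G.maxDegree :=
      le_trans (le_trans Finset.card_image_le (le_of_eq Finset.card_attach)) h
    have hne : (Finset.univ \ F).Nonempty := by
      rw [← Finset.card_pos, Finset.card_sdiff_of_subset (Finset.subset_univ _)]
      simp only [Finset.card_univ, Fintype.card_fin]
      omega
    rw [col, dif_pos hne]
    have hmem := Finset.min'_mem _ hne
    rw [Finset.mem_sdiff] at hmem
    exact hmem.2
  intro u hu hEq
  exact hvF (hEq ▸ Finset.mem_image.mpr ⟨⟨u, hu⟩, Finset.mem_attach _ _, rfl⟩)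

lemma dist_adj_le (hconn : G.Connected) {u v : V} (h : G.Adj u v) :
    G.dist r v ≤ G.dist r u + 1 := by
  have h1 : G.dist u v ≤ 1 := by
    simpa using SimpleGraph.dist_le (SimpleGraph.Walk.cons h SimpleGraph.Walk.nil)
  have := hconn.dist_triangle (u := r) (v := u) (w := v)
  omega

lemma exists_back' (hconn : G.Connected) {v : V} (hv : v ≠ r) :
    ∃ p, G.Adj p v ∧ G.dist r p + 1 = G.dist r v := by
  obtain ⟨w, hw⟩ := (hconn r v).exists_walk_length_eq_dist
  have hpos : 0 < G.dist r v := hconn.pos_dist_of_ne (Ne.symm hv)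
  cases hrev : w.reverse with
  | nil =>
      exfalso
      have : w.length = 0 := by
        have := congrArg SimpleGraph.Walk.length hrev
        simpa using this
      omega
  | @cons _ p _ hadj q =>
      refine ⟨p, hadj.symm, ?_⟩
      have hq : G.dist r p ≤ q.length := by
        rw [SimpleGraph.dist_comm]
        exact SimpleGraph.dist_le q
      have hlen : q.length + 1 = G.dist r v := by
        have := congrArg SimpleGraph.Walk.length hrev
        simp [SimpleGraph.Walk.length_reverse] at this
        omega
      have := dist_adj_le (r := r) hconn hadj.symm
      omega

lemma back_nonempty (hconn : G.Connected) {v : V} (hv : v ≠ r) :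
    1 ≤ (backs G r v).card := by
  obtain ⟨p, hp, hd⟩ := exists_back' hconn hv
  refine Finset.card_pos.mpr ⟨p, ?_⟩
  simp only [backs, Finset.mem_filter, SimpleGraph.mem_neighborFinset]
  exact ⟨hp.symm, hd⟩

lemma backs_r_empty : backs G r r = ∅ := by
  ext u
  simp [backs, SimpleGraph.dist_self]

lemma flats_r_empty (hconn : G.Connected) : flats G r r = ∅ := by
  ext u
  simp only [flats, Finset.mem_filter, SimpleGraph.mem_neighborFinset, Finset.notMem_empty,
    iff_false, not_and]
  intro hadj hd
  rw [SimpleGraph.dist_self] at hd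
  exact G.ne_of_adj hadj (hconn.dist_eq_zero_iff.mp hd)

lemma ord_r_min (hconn : G.Connected) {v : V} (hv : v ≠ r) : ord G r r < ord G r v := by
  apply ord_lt_of_dist_lt
  rw [SimpleGraph.dist_self]
  exact hconn.pos_dist_of_ne (Ne.symm hv)

lemma degree_split (hconn : G.Connected) (v : V) :
    G.degree v = (backs G r v).card + (flats G r v).card + (downs G r v).card := by
  classical
  rw [← SimpleGraph.card_neighborFinset_eq_degree]
  have hsub : G.neighborFinset v = backs G r v ∪ flats G r v ∪ downs G r v := by
    ext u
    simp only [backs, flats, downs, Finset.mem_union, Finset.mem_filter,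
      SimpleGraph.mem_neighborFinset]
    constructor
    · intro h
      have h1 := dist_adj_le (r := r) hconn h
      have h2 := dist_adj_le (r := r) hconn h.symm
      have : G.dist r u + 1 = G.dist r v ∨ G.dist r u = G.dist r v ∨
          G.dist r v + 1 = G.dist r u := by omega
      tauto
    · tauto
  rw [hsub]
  rw [Finset.card_union_of_disjoint, Finset.card_union_of_disjoint]
  · rw [Finset.disjoint_left]
    intro u hu1 hu2
    simp only [backs, flats, downs, Finset.mem_union, Finset.mem_filter] at hu1 hu2
    omega
  · rw [Finset.disjoint_left]
    intro u hu1 hu2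
    simp only [backs, flats, downs, Finset.mem_union, Finset.mem_filter] at hu1 hu2
    omega

lemma sum_downs_eq_sum_backs :
    ∑ v : V, (downs G r v).card = ∑ v : V, (backs G r v).card := by
  classical
  set T : Finset (V × V) :=
    Finset.univ.filter (fun p => G.Adj p.1 p.2 ∧ G.dist r p.1 + 1 = G.dist r p.2) with hT
  have h1 : ∑ v : V, (downs G r v).card = T.card := by
    rw [Finset.card_eq_sum_card_fiberwise (f := Prod.fst) (t := Finset.univ)
      (fun x _ => Finset.mem_univ _)]
    refine Finset.sum_congr rfl (fun v _ => ?_)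
    refine Finset.card_bij (fun u _ => (v, u)) ?_ ?_ ?_
    · intro u hu
      simp only [downs, Finset.mem_filter, SimpleGraph.mem_neighborFinset] at hu
      simp only [hT, Finset.mem_filter, Finset.mem_univ, true_and]
      exact ⟨⟨hu.1, hu.2⟩, trivial⟩
    · intro a _ b _ h
      simpa using congrArg Prod.snd h
    · intro p hp
      simp only [hT, Finset.mem_filter, Finset.mem_univ, true_and] at hp
      refine ⟨p.2, ?_, ?_⟩
      · simp only [downs, Finset.mem_filter, SimpleGraph.mem_neighborFinset]
        rw [← hp.2]
        exact ⟨hp.1.1, hp.1.2⟩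
      · exact Prod.ext hp.2.symm rfl
  have h2 : ∑ v : V, (backs G r v).card = T.card := by
    rw [Finset.card_eq_sum_card_fiberwise (f := Prod.snd) (t := Finset.univ)
      (fun x _ => Finset.mem_univ _)]
    refine Finset.sum_congr rfl (fun v _ => ?_)
    refine Finset.card_bij (fun u _ => (u, v)) ?_ ?_ ?_
    · intro u hu
      simp only [backs, Finset.mem_filter, SimpleGraph.mem_neighborFinset] at hu
      simp only [hT, Finset.mem_filter, Finset.mem_univ, true_and]
      exact ⟨⟨hu.1.symm, hu.2⟩, trivial⟩
    · intro a _ b _ h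
      simpa using congrArg Prod.fst h
    · intro p hp
      simp only [hT, Finset.mem_filter, Finset.mem_univ, true_and] at hp
      refine ⟨p.1, ?_, ?_⟩
      · simp only [backs, Finset.mem_filter, SimpleGraph.mem_neighborFinset]
        rw [← hp.2]
        exact ⟨hp.1.1.symm, hp.1.2⟩
      · exact Prod.ext rfl hp.2.symm
  rw [h1, h2]

lemma master (hconn : G.Connected) (hm : G.edgeFinset.card ≤ Fintype.card V) :
    (∑ v : V, (flats G r v).card) +
      2 * (∑ v ∈ Finset.univ.erase r, ((backs G r v).card - 1)) +
      2 * (backs G r r).card ≤ 2 := by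
  have hdeg : ∑ v : V, G.degree v = 2 * G.edgeFinset.card :=
    SimpleGraph.sum_degrees_eq_twice_card_edges G
  have hsplit : ∑ v : V, G.degree v =
      (∑ v : V, (backs G r v).card) + (∑ v : V, (flats G r v).card)
        + (∑ v : V, (downs G r v).card) := by
    rw [← Finset.sum_add_distrib, ← Finset.sum_add_distrib]
    exact Finset.sum_congr rfl (fun v _ => degree_split hconn v)
  have hdb := sum_downs_eq_sum_backs (G := G) (r := r)
  have hsB : ∑ v : V, (backs G r v).card =
      (backs G r r).card + ∑ v ∈ Finset.univ.erase r, (backs G r v).card :=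
    (Finset.add_sum_erase _ _ (Finset.mem_univ r)).symm
  have hsE : ∑ v ∈ Finset.univ.erase r, (backs G r v).card =
      (∑ v ∈ Finset.univ.erase r, ((backs G r v).card - 1)) +
        (Fintype.card V - 1) := by
    have h1 : ∀ v ∈ Finset.univ.erase r, (backs G r v).card = ((backs G r v).card - 1) + 1 := by
      intro v hv
      have := back_nonempty hconn (Finset.ne_of_mem_erase hv)
      omega
    rw [Finset.sum_congr rfl h1, Finset.sum_add_distrib, Finset.sum_const,
      smul_eq_mul, mul_one, Finset.card_erase_of_mem (Finset.mem_univ r), Finset.card_univ]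
  have hr1 : 1 ≤ Fintype.card V := Fintype.card_pos_iff.mpr ⟨r⟩
  omega

lemma gens_card_le (hconn : G.Connected) (hm : G.edgeFinset.card ≤ Fintype.card V)
    (hΔ : 3 ≤ G.maxDegree) (v : V) :
    (gens G r v).card ≤ G.maxDegree := by
  classical
  by_cases hvr : v = r
  · have hempty : gens G r v = ∅ := by
      ext u
      simp only [mem_gens, Finset.notMem_empty, iff_false, not_and]
      intro hlt _
      rw [hvr] at hlt
      by_cases h : u = r
      · rw [h] at hlt; exact Nat.lt_irrefl _ hlt
      · exact Nat.lt_asymm (ord_r_min hconn h) hlt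
    rw [hempty]
    simp
  -- v ≠ r
  have hdv : 0 < G.dist r v := hconn.pos_dist_of_ne (Ne.symm hvr)
  by_cases hsp : special G r v
  · rcases hsp with hfl | hbk2
    · -- flat case
      obtain ⟨w, hw⟩ := hfl
      have hw' := hw
      simp only [flats, Finset.mem_filter, SimpleGraph.mem_neighborFinset] at hw'
      have hvw : v ≠ w := G.ne_of_adj hw'.1
      have hM := master (r := r) hconn hm
      have hvflw : v ∈ flats G r w := by
        simp only [flats, Finset.mem_filter, SimpleGraph.mem_neighborFinset]
        exact ⟨hw'.1.symm, hw'.2.symm⟩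
      have hflv1 : 1 ≤ (flats G r v).card := Finset.card_pos.mpr ⟨w, hw⟩
      have hflw1 : 1 ≤ (flats G r w).card := Finset.card_pos.mpr ⟨v, hvflw⟩
      have hpair : (flats G r v).card + (flats G r w).card ≤ ∑ x : V, (flats G r x).card := by
        have h1 : ∑ x ∈ ({v, w} : Finset V), (flats G r x).card
            = (flats G r v).card + (flats G r w).card := Finset.sum_pair hvw
        rw [← h1]
        exact Finset.sum_le_sum_of_subset (Finset.subset_univ _)
      have hback1 : ∀ x, x ≠ r → (backs G r x).card = 1 := by
        intro x hx
        have h1 : ((backs G r x).card - 1) ≤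
            ∑ y ∈ Finset.univ.erase r, ((backs G r y).card - 1) :=
          Finset.single_le_sum (f := fun y => (backs G r y).card - 1)
            (fun _ _ => Nat.zero_le _) (Finset.mem_erase.mpr ⟨hx, Finset.mem_univ _⟩)
        have h2 := back_nonempty hconn hx
        omega
      have hbv : (backs G r v).card = 1 := hback1 v hvr
      obtain ⟨p, hp⟩ := Finset.card_eq_one.mp hbv
      have hflats_v : flats G r v = {w} := by
        have h1 : (flats G r v).card = 1 := by omega
        obtain ⟨a, ha⟩ := Finset.card_eq_one.mp h1
        rw [ha] at hw ⊢
        rw [Finset.mem_singleton] at hw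
        rw [hw]
      -- superset
      have hsub : gens G r v ⊆ insert r (insert w {p}) := by
        intro u hu
        rw [mem_gens] at hu
        obtain ⟨hlt, hcase⟩ := hu
        have hune : u ≠ v := ne_of_ord_lt hlt
        have hdle : G.dist r u ≤ G.dist r v := dist_le_of_ord_lt hlt
        simp only [Finset.mem_insert, Finset.mem_singleton]
        rcases hcase with hadj | ⟨hdeq, q, hq1, hq2, hq3⟩ | ⟨hur, _⟩
        · have h2 := dist_adj_le (r := r) hconn hadj
          rcases Nat.lt_or_ge (G.dist r u) (G.dist r v) with hlt'|hge
          · have : u ∈ backs G r v := by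
              simp only [backs, Finset.mem_filter, SimpleGraph.mem_neighborFinset]
              exact ⟨hadj.symm, by omega⟩
            rw [hp, Finset.mem_singleton] at this
            right; right; exact this
          · have : u ∈ flats G r v := by
              simp only [flats, Finset.mem_filter, SimpleGraph.mem_neighborFinset]
              exact ⟨hadj.symm, by omega⟩
            rw [hflats_v, Finset.mem_singleton] at this
            right; left; exact this
        · -- same level clause: u must be special, hence = w
          have hsu : special G r u :=
            special_of_ord_lt hlt hdeq (Or.inl ⟨w, hw⟩)
          have hur : u ≠ r := by
            intro h; subst h
            rw [SimpleGraph.dist_self] at hdeq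
            omega
          rcases hsu with hflu | hbku
          · -- flats u nonempty; then u ∈ {v, w}, u ≠ v so u = w
            by_cases huw : u = w
            · right; left; exact huw
            · exfalso
              have hflu1 : 1 ≤ (flats G r u).card := Finset.card_pos.mpr hflu
              have htriple : (flats G r u).card + ((flats G r v).card + (flats G r w).card)
                  ≤ ∑ x : V, (flats G r x).card := by
                have hnm : u ∉ ({v, w} : Finset V) := by
                  simp only [Finset.mem_insert, Finset.mem_singleton]
                  push_neg
                  exact ⟨hune, huw⟩
                have h1 : ∑ x ∈ insert u ({v, w} : Finset V), (flats G r x).card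
                    = (flats G r u).card + ((flats G r v).card + (flats G r w).card) := by
                  rw [Finset.sum_insert hnm, Finset.sum_pair hvw]
                rw [← h1]
                exact Finset.sum_le_sum_of_subset (Finset.subset_univ _)
              omega
          · have := hback1 u hur
            omega
        · left; exact hur
      calc (gens G r v).card ≤ (insert r (insert w ({p} : Finset V))).card :=
            Finset.card_le_card hsub
        _ ≤ 3 := by
            refine le_trans (Finset.card_insert_le _ _) ?_
            have h2 := Finset.card_insert_le w ({p} : Finset V)
            simp only [Finset.card_singleton] at h2
            omega
        _ ≤ G.maxDegree := hΔ
    · -- two back-neighbors case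
      have hM := master (r := r) hconn hm
      have h1 : ((backs G r v).card - 1) ≤
          ∑ y ∈ Finset.univ.erase r, ((backs G r y).card - 1) :=
        Finset.single_le_sum (f := fun y => (backs G r y).card - 1)
          (fun _ _ => Nat.zero_le _) (Finset.mem_erase.mpr ⟨hvr, Finset.mem_univ _⟩)
      have hfl0 : ∀ x : V, (flats G r x).card = 0 := by
        intro x
        have h2 : (flats G r x).card ≤ ∑ y : V, (flats G r y).card := by
          exact Finset.single_le_sum (f := fun y => (flats G r y).card)
            (fun _ _ => Nat.zero_le _) (Finset.mem_univ x)
        omega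
      have hbv2 : (backs G r v).card = 2 := by omega
      have hsub : gens G r v ⊆ insert r (backs G r v) := by
        intro u hu
        rw [mem_gens] at hu
        obtain ⟨hlt, hcase⟩ := hu
        have hune : u ≠ v := ne_of_ord_lt hlt
        have hdle : G.dist r u ≤ G.dist r v := dist_le_of_ord_lt hlt
        simp only [Finset.mem_insert]
        rcases hcase with hadj | ⟨hdeq, q, hq1, hq2, hq3⟩ | ⟨hur, _⟩
        · have h2 := dist_adj_le (r := r) hconn hadj
          rcases Nat.lt_or_ge (G.dist r u) (G.dist r v) with hlt'|hge
          · right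
            simp only [backs, Finset.mem_filter, SimpleGraph.mem_neighborFinset]
            exact ⟨hadj.symm, by omega⟩
          · exfalso
            have hmem : u ∈ flats G r v := by
              simp only [flats, Finset.mem_filter, SimpleGraph.mem_neighborFinset]
              exact ⟨hadj.symm, by omega⟩
            have : 1 ≤ (flats G r v).card := Finset.card_pos.mpr ⟨u, hmem⟩
            have := hfl0 v
            omega
        · exfalso
          have hsu : special G r u := special_of_ord_lt hlt hdeq (Or.inr (by omega))
          have hur : u ≠ r := by
            intro h; subst h
            rw [SimpleGraph.dist_self] at hdeq
            omega
          rcases hsu with hflu | hbku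
          · have : 1 ≤ (flats G r u).card := Finset.card_pos.mpr hflu
            have := hfl0 u
            omega
          · -- second vertex with two back-nbrs: contradiction with the sum
            have hpairb : ((backs G r v).card - 1) + ((backs G r u).card - 1) ≤
                ∑ y ∈ Finset.univ.erase r, ((backs G r y).card - 1) := by
              have h1 : ∑ y ∈ ({v, u} : Finset V), ((backs G r y).card - 1)
                  = ((backs G r v).card - 1) + ((backs G r u).card - 1) :=
                Finset.sum_pair hune.symm
              rw [← h1]
              refine Finset.sum_le_sum_of_subset ?_
              intro x hx
              simp only [Finset.mem_insert, Finset.mem_singleton] at hx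
              rcases hx with h|h <;> subst h
              · exact Finset.mem_erase.mpr ⟨hvr, Finset.mem_univ _⟩
              · exact Finset.mem_erase.mpr ⟨hur, Finset.mem_univ _⟩
            omega
        · left; exact hur
      calc (gens G r v).card ≤ (insert r (backs G r v)).card := Finset.card_le_card hsub
        _ ≤ 3 := le_trans (Finset.card_insert_le _ _) (by omega)
        _ ≤ G.maxDegree := hΔ
  · -- not special: tree-like vertex
    have hbv1 : (backs G r v).card = 1 := by
      have h1 := back_nonempty hconn hvr
      have h2 : ¬ 2 ≤ (backs G r v).card := fun h => hsp (Or.inr h)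
      omega
    obtain ⟨p, hp⟩ := Finset.card_eq_one.mp hbv1
    have hpmem : p ∈ backs G r v := by rw [hp]; exact Finset.mem_singleton_self p
    simp only [backs, Finset.mem_filter, SimpleGraph.mem_neighborFinset] at hpmem
    have hflv : ¬ (flats G r v).Nonempty := fun h => hsp (Or.inl h)
    have hvdown : v ∈ downs G r p := by
      simp only [downs, Finset.mem_filter, SimpleGraph.mem_neighborFinset]
      exact ⟨hpmem.1.symm, hpmem.2⟩
    have hsub : gens G r v ⊆ insert r (insert p ((downs G r p).erase v)) := by
      intro u hu
      rw [mem_gens] at hu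
      obtain ⟨hlt, hcase⟩ := hu
      have hune : u ≠ v := ne_of_ord_lt hlt
      have hdle : G.dist r u ≤ G.dist r v := dist_le_of_ord_lt hlt
      simp only [Finset.mem_insert]
      rcases hcase with hadj | ⟨hdeq, q, hq1, hq2, hq3⟩ | ⟨hur, _⟩
      · have h2 := dist_adj_le (r := r) hconn hadj
        rcases Nat.lt_or_ge (G.dist r u) (G.dist r v) with hlt'|hge
        · have : u ∈ backs G r v := by
            simp only [backs, Finset.mem_filter, SimpleGraph.mem_neighborFinset]
            exact ⟨hadj.symm, by omega⟩
          rw [hp, Finset.mem_singleton] at this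
          right; left; exact this
        · exfalso
          apply hflv
          refine ⟨u, ?_⟩
          simp only [flats, Finset.mem_filter, SimpleGraph.mem_neighborFinset]
          exact ⟨hadj.symm, by omega⟩
      · -- common back-neighbor clause: q ∈ backs v = {p}
        have hqmem : q ∈ backs G r v := by
          simp only [backs, Finset.mem_filter, SimpleGraph.mem_neighborFinset]
          exact ⟨hq2.symm, hq3⟩
        rw [hp, Finset.mem_singleton] at hqmem
        subst hqmem
        right; right
        refine Finset.mem_erase.mpr ⟨hune, ?_⟩
        simp only [downs, Finset.mem_filter, SimpleGraph.mem_neighborFinset]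
        exact ⟨hq1, by omega⟩
      · left; exact hur
    have hdownv : 1 ≤ (downs G r p).card := Finset.card_pos.mpr ⟨v, hvdown⟩
    by_cases hpr : p = r
    · have hsub2 : gens G r v ⊆ insert r ((downs G r p).erase v) := by
        intro u hu
        have h := hsub hu
        simp only [Finset.mem_insert] at h ⊢
        rcases h with h|h|h
        · left; exact h
        · left; exact h.trans hpr
        · right; exact h
      have hdown_le : (downs G r p).card ≤ G.maxDegree := by
        have h1 := degree_split (r := r) hconn p
        have h2 := G.degree_le_maxDegree p
        omega
      calc (gens G r v).card ≤ (insert r ((downs G r p).erase v)).card :=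
            Finset.card_le_card hsub2
        _ ≤ 1 + ((downs G r p).card - 1) := by
            have := Finset.card_insert_le r ((downs G r p).erase v)
            rw [Finset.card_erase_of_mem hvdown] at this
            omega
        _ ≤ G.maxDegree := by omega
    · have hbp := back_nonempty hconn hpr
      have hdown_le : (downs G r p).card ≤ G.maxDegree - 1 := by
        have := degree_split (r := r) hconn p
        have hdle := G.degree_le_maxDegree p
        omega
      calc (gens G r v).card ≤ (insert r (insert p ((downs G r p).erase v))).card :=
            Finset.card_le_card hsub
        _ ≤ 1 + (1 + ((downs G r p).card - 1)) := by
            refine le_trans (Finset.card_insert_le _ _) ?_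
            have h2 := Finset.card_insert_le p ((downs G r p).erase v)
            rw [Finset.card_erase_of_mem hvdown] at h2
            omega
        _ ≤ G.maxDegree := by omega

lemma iso_degree (φ : G ≃g G) (v : V) : G.degree (φ v) = G.degree v := by
  rw [← SimpleGraph.card_neighborFinset_eq_degree, ← SimpleGraph.card_neighborFinset_eq_degree]
  have h : G.neighborFinset (φ v) = (G.neighborFinset v).image φ := by
    ext u
    simp only [SimpleGraph.mem_neighborFinset, Finset.mem_image]
    constructor
    · intro h
      refine ⟨φ.symm u, ?_, φ.apply_symm_apply u⟩
      have h2 : G.Adj (φ v) (φ (φ.symm u)) := by rwa [φ.apply_symm_apply]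
      exact φ.map_adj_iff.mp h2
    · rintro ⟨a, ha, rfl⟩
      exact φ.map_adj_iff.mpr ha
  rw [h, Finset.card_image_of_injective _ φ.injective]

lemma iso_dist (hconn : G.Connected) (φ : G ≃g G) (a b : V) :
    G.dist (φ a) (φ b) = G.dist a b := by
  have key : ∀ (ψ : G ≃g G) (a b : V), G.dist (ψ a) (ψ b) ≤ G.dist a b := by
    intro ψ a b
    obtain ⟨w, hw⟩ := (hconn a b).exists_walk_length_eq_dist
    calc G.dist (ψ a) (ψ b) ≤ (w.map ψ.toHom).length := SimpleGraph.dist_le _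
      _ = w.length := SimpleGraph.Walk.length_map ψ.toHom w
      _ = G.dist a b := hw
  refine le_antisymm (key φ a b) ?_
  have h2 := key φ.symm (φ a) (φ b)
  rwa [φ.symm_apply_apply, φ.symm_apply_apply] at h2

lemma rigid (hconn : G.Connected) (hm : G.edgeFinset.card ≤ Fintype.card V)
    (hΔ : 3 ≤ G.maxDegree) (hr : G.maxDegree = G.degree r)
    (φ : G ≃g G) (hc : ∀ x : V, col G r (φ x) = col G r x) : ∀ v, φ v = v := by
  have hfix_r : φ r = r := by
    by_contra hne
    have hlt : ord G r r < ord G r (φ r) := ord_r_min hconn hne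
    have hmem : r ∈ gens G r (φ r) := mem_gens.mpr ⟨hlt, Or.inr (Or.inr ⟨rfl, by
      rw [iso_degree φ r, ← hr]⟩)⟩
    exact col_spec (gens_card_le hconn hm hΔ (φ r)) r hmem (hc r).symm
  have hdist : ∀ x, G.dist r (φ x) = G.dist r x := by
    intro x
    conv_lhs => rw [← hfix_r]
    exact iso_dist hconn φ r x
  intro v
  suffices h : ∀ k, ∀ v : V, G.dist r v = k → φ v = v from h _ v rfl
  intro k
  induction k using Nat.strong_induction_on with
  | _ k ih =>
    intro v hv
    rcases Nat.eq_zero_or_pos k with h0|hpos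
    · subst h0
      have h1 : r = v := hconn.dist_eq_zero_iff.mp hv
      rw [← h1]; exact hfix_r
    · by_contra hne
      have hvr : v ≠ r := by
        intro h; rw [h, SimpleGraph.dist_self] at hv; omega
      obtain ⟨p, hpadj, hpd⟩ := exists_back' hconn hvr
      have hp_fix : φ p = p := ih (G.dist r p) (by omega) p rfl
      have hadj2 : G.Adj p (φ v) := by
        have h3 := φ.map_adj_iff.mpr hpadj
        rwa [hp_fix] at h3
      have hdv : G.dist r (φ v) = k := by rw [hdist v]; exact hv
      rcases Nat.lt_or_ge (ord G r v) (ord G r (φ v)) with hlt|hge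
      · have hmem : v ∈ gens G r (φ v) := mem_gens.mpr
          ⟨hlt, Or.inr (Or.inl ⟨by omega, p, hpadj, hadj2, by omega⟩)⟩
        exact col_spec (gens_card_le hconn hm hΔ (φ v)) v hmem (hc v).symm
      · have hlt2 : ord G r (φ v) < ord G r v := by
          have : ord G r (φ v) ≠ ord G r v := fun h => hne (ord_injective h)
          omega
        have hmem : φ v ∈ gens G r v := mem_gens.mpr
          ⟨hlt2, Or.inr (Or.inl ⟨by omega, p, hadj2, hpadj, by omega⟩)⟩
        exact col_spec (gens_card_le hconn hm hΔ v) (φ v) hmem (hc v)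

end UDC

/-- **Theorem 3.3.** If `G` is a connected graph of order `n` and size `m` with `m ≤ n`
and maximum degree `Δ ≥ 3`, then `χ_D(G) ≤ Δ + 1`: there is a proper coloring of `G` with
`Δ + 1` colors preserved by no nontrivial automorphism of `G`. -/
theorem unicyclic_distinguishing_chromatic {V : Type*} [Fintype V] [DecidableEq V]
    (G : SimpleGraph V) [DecidableRel G.Adj]
    (hconn : G.Connected) (hm : G.edgeFinset.card ≤ Fintype.card V)
    (hΔ : 3 ≤ G.maxDegree) :
    ∃ c : V → Fin (G.maxDegree + 1),
      (∀ u v : V, G.Adj u v → c u ≠ c v) ∧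
      (∀ φ : G ≃g G, c ∘ φ = c → ∀ v : V, φ v = v) := by
  classical
  have hne : Nonempty V := hconn.nonempty
  obtain ⟨r, hr⟩ := G.exists_maximal_degree_vertex
  refine ⟨UDC.col G r, ?_, ?_⟩
  · intro u v hadj
    have hneq : u ≠ v := G.ne_of_adj hadj
    rcases Nat.lt_or_ge (UDC.ord G r u) (UDC.ord G r v) with hlt|hge
    · exact UDC.col_spec (UDC.gens_card_le hconn hm hΔ v) u
        (UDC.mem_gens.mpr ⟨hlt, Or.inl hadj⟩)
    · have hlt2 : UDC.ord G r v < UDC.ord G r u := by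
        have : UDC.ord G r v ≠ UDC.ord G r u := fun h => hneq (UDC.ord_injective h).symm
        omega
      exact (UDC.col_spec (UDC.gens_card_le hconn hm hΔ u) v
        (UDC.mem_gens.mpr ⟨hlt2, Or.inl hadj.symm⟩)).symm
  · intro φ hcφ v
    exact UDC.rigid hconn hm hΔ hr φ (fun x => congrFun hcφ x) v
end

section
/- Let T be a tree (a connected acyclic simple graph) with a distinguished root vertex z, and let c : V(T) → Fin k be a labeling such that every non-root vertex receives a label different from its parent (its unique neighbor lying at distance one less from z) and different from each of its siblings (the other vertices having the same parent). Then c is a proper labeling of T, and the only automorphism φ of T with φ(z) = z and c ∘ φ = c is the identity. -/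
open SimpleGraph

private lemma aux_path_len {V : Type*} {T : SimpleGraph V} (hT : T.IsTree) {u v : V}
    {p : T.Walk u v} (hp : p.IsPath) : p.length = T.dist u v := by
  obtain ⟨q, hq, hql⟩ := hT.isConnected.exists_path_of_dist u v
  obtain ⟨r, _, hun⟩ := hT.existsUnique_path u v
  rw [hun p hp, ← hun q hq, hql]

private lemma aux_adj_dist {V : Type*} {T : SimpleGraph V} (hT : T.IsTree) {z u v : V}
    (huv : T.Adj u v) : T.dist z v + 1 = T.dist z u ∨ T.dist z u + 1 = T.dist z v := by
  classical
  obtain ⟨p, hp, hpl⟩ := hT.isConnected.exists_path_of_dist z u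
  by_cases hv : v ∈ p.support
  · left
    have hq : (p.takeUntil v hv).IsPath := hp.takeUntil hv
    have hr : (p.dropUntil v hv).IsPath := hp.dropUntil hv
    have he : (Walk.cons huv.symm Walk.nil : T.Walk v u) = p.dropUntil v hv := by
      obtain ⟨r, _, hun⟩ := hT.existsUnique_path v u
      rw [hun _ hr, hun (Walk.cons huv.symm Walk.nil) (by simp [huv.symm.ne])]
    have := congrArg Walk.length (p.take_spec hv)
    rw [Walk.length_append, ← he] at this
    simp only [Walk.length_cons, Walk.length_nil] at this
    rw [← hpl, ← this, aux_path_len hT hq]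
  · right
    have hq : (Walk.cons huv.symm p.reverse).IsPath := by
      rw [Walk.cons_isPath_iff]
      exact ⟨hp.reverse, by simpa using hv⟩
    have := aux_path_len hT hq
    simp only [Walk.length_cons, Walk.length_reverse] at this
    rw [hpl, dist_comm (G:=T) (u:=v) (v:=z)] at this
    omega

private lemma aux_parent {V : Type*} {T : SimpleGraph V} (hT : T.IsTree) {z v : V}
    (hv : v ≠ z) : ∃ p : V, T.Adj v p ∧ T.dist z p + 1 = T.dist z v := by
  obtain ⟨w, hw, hwl⟩ := hT.isConnected.exists_path_of_dist v z
  cases w with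
  | nil => exact absurd rfl hv
  | cons h q =>
    rename_i x
    refine ⟨x, h, ?_⟩
    have h1 : T.dist v z = q.length + 1 := by simp [← hwl]
    have h2 : T.dist z x ≤ q.length := by
      simpa using T.dist_le q.reverse
    have h3 : T.dist z v ≤ T.dist z x + 1 := by
      calc T.dist z v ≤ T.dist z x + T.dist x v := hT.isConnected.dist_triangle
        _ ≤ T.dist z x + 1 := by
            have : T.dist x v = 1 := dist_eq_one_iff_adj.2 h.symm
            omega
    rw [T.dist_comm] at h1
    omega

private lemma aux_iso_dist {V : Type*} {T : SimpleGraph V} (hc : T.Connected) (φ : T ≃g T) (u v : V) :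
    T.dist (φ u) (φ v) = T.dist u v := by
  have key : ∀ (ψ : T ≃g T) (a b : V), T.dist (ψ a) (ψ b) ≤ T.dist a b := by
    intro ψ a b
    obtain ⟨p, hpl⟩ := (hc a b).exists_walk_length_eq_dist
    calc T.dist (ψ a) (ψ b) ≤ (p.map ψ.toHom).length := T.dist_le _
      _ = T.dist a b := by rw [Walk.length_map, hpl]
  refine le_antisymm (key φ u v) ?_
  have := key φ.symm (φ u) (φ v)
  simpa using this

/-- **Lemma 3.2 (Collins–Trenk).** A labeling of a rooted tree `(T, z)` in which each
non-root vertex is labeled differently from its parent (its unique neighbor at distance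
one less from `z`) and from each of its siblings is a proper labeling that is preserved
by no nontrivial automorphism of `T` fixing the root `z`. -/
theorem rooted_tree_labeling_proper_distinguishing {V : Type*}
    (T : SimpleGraph V) (hT : T.IsTree) (z : V) (k : ℕ) (c : V → Fin k)
    (hparent : ∀ v p : V, v ≠ z → T.Adj v p → T.dist z p + 1 = T.dist z v → c v ≠ c p)
    (hsibling : ∀ v w p : V, v ≠ z → w ≠ z → v ≠ w →
      T.Adj v p → T.Adj w p →
      T.dist z p + 1 = T.dist z v → T.dist z p + 1 = T.dist z w → c v ≠ c w) :
    (∀ u v : V, T.Adj u v → c u ≠ c v) ∧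
    (∀ φ : T ≃g T, φ z = z → c ∘ φ = c → ∀ v : V, φ v = v) := by
  have hne : ∀ u : V, T.dist z u ≠ 0 → u ≠ z := by
    intro u h hu; subst hu; simp [T.dist_self] at h
  constructor
  · intro u v huv
    rcases aux_adj_dist hT (z := z) huv with h | h
    · exact hparent u v (hne u (by omega)) huv h
    · exact (hparent v u (hne v (by omega)) huv.symm h).symm
  · intro φ hz hc v
    have hcv : ∀ x : V, c (φ x) = c x := fun x => congrFun hc x
    have hdist : ∀ x : V, T.dist z (φ x) = T.dist z x := by
      intro x
      conv_lhs => rw [← hz]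
      exact aux_iso_dist hT.isConnected φ z x
    have H : ∀ n : ℕ, ∀ x : V, T.dist z x = n → φ x = x := by
      intro n
      induction n using Nat.strong_induction_on with
      | _ n ih =>
        intro x hx
        rcases Nat.eq_zero_or_pos n with h0 | hpos
        · subst h0
          have hxz : x = z := by
            by_contra hne
            have := (dist_ne_zero_iff_ne_and_reachable (G:=T)).2
              ⟨Ne.symm hne, hT.isConnected z x⟩
            omega
          rw [hxz, hz]
        · have hxz : x ≠ z := by
            intro h; subst h; rw [T.dist_self] at hx; omega
          obtain ⟨p, hvp, hdp⟩ := aux_parent hT hxz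
          have hφp : φ p = p := by
            refine ih (T.dist z p) ?_ p rfl
            omega
          by_contra hne
          have hadj : T.Adj (φ x) p := by
            rw [← hφp]
            exact φ.map_adj_iff.2 hvp
          have hφxz : φ x ≠ z := by
            intro h
            have := hdist x
            rw [h, T.dist_self] at this
            omega
          have hdφ : T.dist z p + 1 = T.dist z (φ x) := by
            rw [hdist x]; exact hdp
          exact hsibling (φ x) x p hφxz hxz hne hadj hvp hdφ hdp (hcv x)
    exact H (T.dist z v) v rfl
end

section
/- Let T be a tree (a connected acyclic simple graph) whose maximum degree Δ satisfies Δ ≥ 1. Then χ_D(T) ≤ Δ + 1; that is, there exists a proper vertex coloring c : V(T) → Fin (Δ + 1) such that the only automorphism φ of T satisfying c ∘ φ = c is the identity. -/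
open SimpleGraph Finset

set_option linter.unusedSectionVars false

namespace TreeDistAux

variable {V : Type*} [Fintype V] [DecidableEq V] (T : SimpleGraph V) [DecidableRel T.Adj]

private lemma dist_iso_le (φ : T ≃g T) (u v : V) (h : T.Reachable u v) :
    T.dist (φ u) (φ v) ≤ T.dist u v := by
  obtain ⟨p, hp⟩ := h.exists_walk_length_eq_dist
  calc T.dist (φ u) (φ v) ≤ (p.map φ.toHom).length := SimpleGraph.dist_le _
    _ = T.dist u v := by rw [Walk.length_map, hp]

private lemma dist_iso (hc : T.Connected) (φ : T ≃g T) (u v : V) :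
    T.dist (φ u) (φ v) = T.dist u v := by
  refine le_antisymm (dist_iso_le T φ u v (hc u v)) ?_
  have := dist_iso_le T φ.symm (φ u) (φ v) (hc _ _)
  simpa using this

private lemma dist_le_of_mem_support {r u x : V} (p : T.Walk r u) (hx : x ∈ p.support) :
    T.dist r x ≤ p.length :=
  le_trans (SimpleGraph.dist_le (p.takeUntil x hx)) (Walk.length_takeUntil_le p hx)

private lemma dist_add_of_mem_support (hc : T.Connected) {r u x : V} (p : T.Walk r u)
    (hp : p.length = T.dist r u) (hx : x ∈ p.support) :
    T.dist r x + T.dist x u = T.dist r u := by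
  have h1 : T.dist r x ≤ (p.takeUntil x hx).length := SimpleGraph.dist_le _
  have h2 : T.dist x u ≤ (p.dropUntil x hx).length := SimpleGraph.dist_le _
  have h3 : (p.takeUntil x hx).length + (p.dropUntil x hx).length = p.length := by
    rw [← Walk.length_append, Walk.take_spec]
  have h4 : T.dist r u ≤ T.dist r x + T.dist x u := hc.dist_triangle
  omega

private lemma concat_isPath {r u v : V} (p : T.Walk r u) (hp : p.IsPath) (h : T.Adj u v)
    (hv : v ∉ p.support) : (p.concat h).IsPath := by
  rw [← Walk.isPath_reverse_iff, Walk.reverse_concat]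
  exact Walk.IsPath.cons ((Walk.isPath_reverse_iff p).2 hp)
    (by rwa [Walk.support_reverse, List.mem_reverse])

private lemma dist_le_succ_of_adj (hc : T.Connected) {r u v : V} (h : T.Adj u v) :
    T.dist r v ≤ T.dist r u + 1 := by
  obtain ⟨w, hw⟩ := (hc r u).exists_walk_length_eq_dist
  have := SimpleGraph.dist_le (w.concat h)
  rwa [Walk.length_concat, hw] at this

/-- The set of children of `p` in the tree rooted at `r`. -/
noncomputable def children (r p : V) : Finset V :=
  (T.neighborFinset p).filter (fun u => T.dist r p + 1 = T.dist r u)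

private lemma mem_children {r p u : V} :
    u ∈ children T r p ↔ T.Adj p u ∧ T.dist r p + 1 = T.dist r u := by
  rw [children, Finset.mem_filter, SimpleGraph.mem_neighborFinset]

/-- List of available colors, given the parent's color. -/
noncomputable def aList (n : ℕ) (x : Fin (n + 1)) : List (Fin (n + 1)) :=
  ((Finset.univ.erase 0).erase x).toList

variable (hT : T.IsTree) (r : V)
include hT

private lemma exists_parent {v : V} (hv : v ≠ r) :
    ∃ u, T.Adj u v ∧ T.dist r u + 1 = T.dist r v := by
  have hc := hT.isConnected
  obtain ⟨q, hq⟩ := (hc v r).exists_walk_length_eq_dist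
  cases q with
  | nil => exact absurd rfl hv
  | @cons _ u _ hadj q' =>
      refine ⟨u, hadj.symm, ?_⟩
      have h1 : T.dist r u ≤ q'.length := by
        have := SimpleGraph.dist_le q'.reverse
        rwa [Walk.length_reverse] at this
      have h2 : T.dist r v ≤ T.dist r u + 1 := dist_le_succ_of_adj T hc hadj.symm
      have h3 : q'.length + 1 = T.dist v r := by simpa using hq
      rw [SimpleGraph.dist_comm] at h3
      omega

private lemma adj_dist_ne {u v : V} (h : T.Adj u v) : T.dist r u ≠ T.dist r v := by
  intro he
  have hc := hT.isConnected
  obtain ⟨p, hp⟩ := (hc r u).exists_walk_length_eq_dist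
  have hv : v ∉ p.support := by
    intro hmem
    have h2 := dist_add_of_mem_support T hc p hp hmem
    have h3 : T.dist v u = 0 := by omega
    exact h.ne' ((hc v u).dist_eq_zero_iff.1 h3)
  have hP : (p.concat h).IsPath :=
    concat_isPath T p (p.isPath_of_length_eq_dist hp) h hv
  obtain ⟨q, hq⟩ := (hc r v).exists_walk_length_eq_dist
  have hQ := q.isPath_of_length_eq_dist hq
  have heq := (hT.existsUnique_path r v).unique hP hQ
  have hl := congrArg Walk.length heq
  rw [Walk.length_concat, hp, hq, he] at hl
  omega

private lemma parent_unique' {v u u' : V} (h : T.Adj u v) (h' : T.Adj u' v)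
    (hd : T.dist r u + 1 = T.dist r v) (hd' : T.dist r u' + 1 = T.dist r v) : u = u' := by
  have hc := hT.isConnected
  obtain ⟨p, hp⟩ := (hc r u).exists_walk_length_eq_dist
  obtain ⟨p', hp'⟩ := (hc r u').exists_walk_length_eq_dist
  have hv : v ∉ p.support := fun hmem => by
    have := dist_le_of_mem_support T p hmem; omega
  have hv' : v ∉ p'.support := fun hmem => by
    have := dist_le_of_mem_support T p' hmem; omega
  have hP : (p.concat h).IsPath :=
    concat_isPath T p (p.isPath_of_length_eq_dist hp) h hv
  have hP' : (p'.concat h').IsPath :=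
    concat_isPath T p' (p'.isPath_of_length_eq_dist hp') h' hv'
  have heq := (hT.existsUnique_path r v).unique hP hP'
  obtain ⟨huv, -⟩ := Walk.concat_inj heq
  exact huv

noncomputable def parent (v : V) : V :=
  if h : v = r then v else (exists_parent T hT r h).choose

private lemma parent_adj {v : V} (h : v ≠ r) : T.Adj (parent T hT r v) v := by
  rw [parent, dif_neg h]
  exact (exists_parent T hT r h).choose_spec.1

private lemma parent_dist {v : V} (h : v ≠ r) :
    T.dist r (parent T hT r v) + 1 = T.dist r v := by
  rw [parent, dif_neg h]
  exact (exists_parent T hT r h).choose_spec.2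

private lemma eq_parent {u v : V} (h : T.Adj u v) (hd : T.dist r u + 1 = T.dist r v) :
    u = parent T hT r v := by
  have hv : v ≠ r := by
    intro he
    rw [he, SimpleGraph.dist_self] at hd
    omega
  exact parent_unique' T hT r h (parent_adj T hT r hv) hd (parent_dist T hT r hv)

/-- The coloring. -/
noncomputable def col : V → Fin (T.maxDegree + 1) := fun v =>
  if h : v = r then 0
  else
    (aList T.maxDegree (col (parent T hT r v))).getD
      ((children T r (parent T hT r v)).toList.idxOf v) 0
termination_by v => T.dist r v
decreasing_by
  have := parent_dist T hT r h
  omega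

private lemma col_r : col T hT r r = 0 := by
  rw [col]
  simp

private lemma card_children_le_root :
    (children T r r).card ≤
      ((Finset.univ.erase (0 : Fin (T.maxDegree + 1))).erase (col T hT r r)).card := by
  rw [col_r, Finset.erase_idem, Finset.card_erase_of_mem (Finset.mem_univ _),
    Finset.card_univ, Fintype.card_fin]
  have h1 : (children T r r).card ≤ T.degree r :=
    Finset.card_le_card (Finset.filter_subset _ _)
  have h2 := T.degree_le_maxDegree r
  omega

private lemma card_children_le_of_ne {p : V} (hp : p ≠ r) (h0 : col T hT r p ≠ 0) :
    (children T r p).card ≤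
      ((Finset.univ.erase (0 : Fin (T.maxDegree + 1))).erase (col T hT r p)).card := by
  have hcolp : col T hT r p ∈ Finset.univ.erase (0 : Fin (T.maxDegree + 1)) :=
    Finset.mem_erase.2 ⟨h0, Finset.mem_univ _⟩
  have e1 : ((Finset.univ.erase (0 : Fin (T.maxDegree + 1))).erase (col T hT r p)).card
      = T.maxDegree - 1 := by
    rw [Finset.card_erase_of_mem hcolp, Finset.card_erase_of_mem (Finset.mem_univ _),
      Finset.card_univ, Fintype.card_fin]
    omega
  have hppd := parent_dist T hT r hp
  have hsub : children T r p ⊆ (T.neighborFinset p).erase (parent T hT r p) := by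
    intro x hx
    rw [mem_children] at hx
    rw [Finset.mem_erase, SimpleGraph.mem_neighborFinset]
    refine ⟨?_, hx.1⟩
    intro hxe
    rw [hxe] at hx
    omega
  have e2 : ((T.neighborFinset p).erase (parent T hT r p)).card = T.degree p - 1 := by
    have hm : parent T hT r p ∈ T.neighborFinset p := by
      rw [SimpleGraph.mem_neighborFinset]
      exact (parent_adj T hT r hp).symm
    rw [Finset.card_erase_of_mem hm]
    rfl
  have h3 := Finset.card_le_card hsub
  have h4 := T.degree_le_maxDegree p
  omega

private lemma col_spec : ∀ (n : ℕ) (v : V), T.dist r v ≤ n → v ≠ r →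
    ((children T r (parent T hT r v)).toList.idxOf v <
      (aList T.maxDegree (col T hT r (parent T hT r v))).length) ∧
    col T hT r v ≠ 0 ∧ col T hT r v ≠ col T hT r (parent T hT r v) := by
  intro n
  induction n with
  | zero =>
    intro v hv hne
    have := hT.isConnected.pos_dist_of_ne (fun h => hne h.symm)
    omega
  | succ n ih =>
    intro v hv hne
    have hpd := parent_dist T hT r hne
    have hpa := parent_adj T hT r hne
    have hcard : (children T r (parent T hT r v)).card ≤
        ((Finset.univ.erase (0 : Fin (T.maxDegree + 1))).erase
          (col T hT r (parent T hT r v))).card := by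
      by_cases hp : parent T hT r v = r
      · rw [hp]; exact card_children_le_root T hT r
      · have hdp : T.dist r (parent T hT r v) ≤ n := by omega
        obtain ⟨-, hne0, -⟩ := ih (parent T hT r v) hdp hp
        exact card_children_le_of_ne T hT r hp hne0
    have hvmem : v ∈ children T r (parent T hT r v) :=
      (mem_children T).2 ⟨hpa, hpd⟩
    have hidx : (children T r (parent T hT r v)).toList.idxOf v <
        (children T r (parent T hT r v)).toList.length :=
      List.idxOf_lt_length_iff.2 (Finset.mem_toList.2 hvmem)
    have hlen := Finset.length_toList (children T r (parent T hT r v))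
    have halen : (aList T.maxDegree (col T hT r (parent T hT r v))).length =
        ((Finset.univ.erase (0 : Fin (T.maxDegree + 1))).erase
          (col T hT r (parent T hT r v))).card := Finset.length_toList _
    have hlt : (children T r (parent T hT r v)).toList.idxOf v <
        (aList T.maxDegree (col T hT r (parent T hT r v))).length := by omega
    refine ⟨hlt, ?_⟩
    have hcol : col T hT r v =
        (aList T.maxDegree (col T hT r (parent T hT r v)))[(children T r
          (parent T hT r v)).toList.idxOf v] := by
      rw [col, dif_neg hne]
      exact List.getD_eq_getElem _ _ hlt
    have hmem : col T hT r v ∈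
        (Finset.univ.erase (0 : Fin (T.maxDegree + 1))).erase
          (col T hT r (parent T hT r v)) := by
      rw [← Finset.mem_toList]
      rw [hcol]
      exact List.getElem_mem _
    rw [Finset.mem_erase, Finset.mem_erase] at hmem
    exact ⟨hmem.2.1, hmem.1⟩

end TreeDistAux

/-- **(Collins–Trenk.)** For every tree `T` with maximum degree `Δ ≥ 1`,
`χ_D(T) ≤ Δ + 1`: there is a proper coloring of `T` with `Δ + 1` colors preserved by no
nontrivial automorphism of `T`. -/
theorem tree_distinguishing_chromatic {V : Type*} [Fintype V]
    (T : SimpleGraph V) [DecidableRel T.Adj]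
    (hT : T.IsTree) (hΔ : 1 ≤ T.maxDegree) :
    ∃ c : V → Fin (T.maxDegree + 1),
      (∀ u v : V, T.Adj u v → c u ≠ c v) ∧
      (∀ φ : T ≃g T, c ∘ φ = c → ∀ v : V, φ v = v) := by
  classical
  have hc := hT.isConnected
  obtain ⟨r⟩ := hc.nonempty
  refine ⟨TreeDistAux.col T hT r, ?_, ?_⟩
  · -- properness
    have key : ∀ u v : V, T.Adj u v → T.dist r u + 1 = T.dist r v →
        TreeDistAux.col T hT r u ≠ TreeDistAux.col T hT r v := by
      intro u v hadj hd
      have hvr : v ≠ r := by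
        intro he
        rw [he, SimpleGraph.dist_self] at hd
        omega
      have hu : u = TreeDistAux.parent T hT r v := TreeDistAux.eq_parent T hT r hadj hd
      have := (TreeDistAux.col_spec T hT r (T.dist r v) v le_rfl hvr).2.2
      rw [← hu] at this
      exact fun he => this he.symm
    intro u v hadj
    have hne := TreeDistAux.adj_dist_ne T hT r hadj
    have h1 := TreeDistAux.dist_le_succ_of_adj T hc (r := r) hadj
    have h2 := TreeDistAux.dist_le_succ_of_adj T hc (r := r) hadj.symm
    rcases lt_or_gt_of_ne hne with h | h
    · exact key u v hadj (by omega)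
    · exact fun he => key v u hadj.symm (by omega) he.symm
  · -- distinguishing
    intro φ hφ
    have hfix : ∀ x : V, TreeDistAux.col T hT r (φ x) = TreeDistAux.col T hT r x :=
      fun x => congrFun hφ x
    have hr : φ r = r := by
      by_contra hne'
      have h0 := (TreeDistAux.col_spec T hT r (T.dist r (φ r)) (φ r) le_rfl hne').2.1
      rw [hfix r, TreeDistAux.col_r] at h0
      exact h0 rfl
    have hdist : ∀ x : V, T.dist r (φ x) = T.dist r x := fun x => by
      have := TreeDistAux.dist_iso T hc φ r x
      rwa [hr] at this
    suffices H : ∀ (n : ℕ) (v : V), T.dist r v ≤ n → φ v = v from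
      fun v => H (T.dist r v) v le_rfl
    intro n
    induction n with
    | zero =>
      intro v hv
      have hvr : v = r := by
        by_contra hne'
        have := hc.pos_dist_of_ne (fun h => hne' h.symm)
        omega
      rw [hvr]; exact hr
    | succ n ih =>
      intro v hv
      by_cases hvr : v = r
      · rw [hvr]; exact hr
      · have hpd := TreeDistAux.parent_dist T hT r hvr
        have hpfix : φ (TreeDistAux.parent T hT r v) = TreeDistAux.parent T hT r v :=
          ih _ (by omega)
        have hfvr : φ v ≠ r := by
          intro h0
          have h1 := hdist v
          rw [h0, SimpleGraph.dist_self] at h1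
          have := hc.pos_dist_of_ne (fun h => hvr h.symm)
          omega
        have hadj : T.Adj (TreeDistAux.parent T hT r v) (φ v) := by
          have h1 : T.Adj (φ (TreeDistAux.parent T hT r v)) (φ v) :=
            φ.map_adj_iff.2 (TreeDistAux.parent_adj T hT r hvr)
          rwa [hpfix] at h1
        have hparent : TreeDistAux.parent T hT r (φ v) = TreeDistAux.parent T hT r v :=
          (TreeDistAux.eq_parent T hT r hadj (by rw [hdist]; exact hpd)).symm
        have hs1 := (TreeDistAux.col_spec T hT r (T.dist r v) v le_rfl hvr).1
        have hs2 := (TreeDistAux.col_spec T hT r (T.dist r (φ v)) (φ v) le_rfl hfvr).1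
        rw [hparent] at hs2
        have e1 : TreeDistAux.col T hT r v =
            (TreeDistAux.aList T.maxDegree (TreeDistAux.col T hT r
              (TreeDistAux.parent T hT r v)))[(TreeDistAux.children T r
              (TreeDistAux.parent T hT r v)).toList.idxOf v] := by
          rw [TreeDistAux.col, dif_neg hvr]
          exact List.getD_eq_getElem _ _ hs1
        have e2 : TreeDistAux.col T hT r (φ v) =
            (TreeDistAux.aList T.maxDegree (TreeDistAux.col T hT r
              (TreeDistAux.parent T hT r v)))[(TreeDistAux.children T r
              (TreeDistAux.parent T hT r v)).toList.idxOf (φ v)] := by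
          rw [TreeDistAux.col, dif_neg hfvr, hparent]
          exact List.getD_eq_getElem _ _ hs2
        have hcoleq := hfix v
        rw [e1, e2] at hcoleq
        have hnodup : (TreeDistAux.aList T.maxDegree (TreeDistAux.col T hT r
            (TreeDistAux.parent T hT r v))).Nodup := Finset.nodup_toList _
        have hidxeq : (TreeDistAux.children T r
            (TreeDistAux.parent T hT r v)).toList.idxOf (φ v) =
            (TreeDistAux.children T r (TreeDistAux.parent T hT r v)).toList.idxOf v :=
          (hnodup.getElem_inj_iff).1 hcoleq
        have hvmem : v ∈ (TreeDistAux.children T r (TreeDistAux.parent T hT r v)).toList :=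
          Finset.mem_toList.2 ((TreeDistAux.mem_children T).2
            ⟨TreeDistAux.parent_adj T hT r hvr, hpd⟩)
        have hfvmem : φ v ∈ (TreeDistAux.children T r
            (TreeDistAux.parent T hT r v)).toList :=
          Finset.mem_toList.2 ((TreeDistAux.mem_children T).2
            ⟨hadj, by rw [hdist]; exact hpd⟩)
        calc φ v = (TreeDistAux.children T r (TreeDistAux.parent T hT r v)).toList[
              (TreeDistAux.children T r (TreeDistAux.parent T hT r v)).toList.idxOf (φ v)]'
              (List.idxOf_lt_length_iff.2 hfvmem) :=
            (List.getElem_idxOf _).symm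
          _ = (TreeDistAux.children T r (TreeDistAux.parent T hT r v)).toList[
              (TreeDistAux.children T r (TreeDistAux.parent T hT r v)).toList.idxOf v]'
              (List.idxOf_lt_length_iff.2 hvmem) := by
            congr 1
          _ = v := List.getElem_idxOf _
end
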